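/- Let K ≥ 2, N ≥ 1, x : {1,…,N} → {1,…,K} with every category nonempty, and let u ∈ Δ^N have all coordinates strictly positive with u ∈ R_x. Fix k ∈ {1,…,K}. With edge weights log η_{j→ℓ}(u), let m(ℓ) = min(ℓ→k) over simple walks from ℓ to k, and define θ* ∈ Δ by θ*_ℓ = exp(−m(ℓ)) / Σ_{ℓ'} exp(−m(ℓ')). Then u_n ∈ Δ_k(θ*) for every n ∈ I_k. -/

import Mathlib

noncomputable section

/-- The `ℓ`-th vertex of the probability simplex in `ℝ^K` (standard basis vector). -/
def vtx (K : ℕ) (ℓ : Fin K) : Fin K → ℝ := fun i => if i = ℓ then 1 else 0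

/-- The subsimplex `Δ_k(θ)`: convex hull of `{θ} ∪ {V_ℓ : ℓ ≠ k}`. -/
def subsimplex (K : ℕ) (k : Fin K) (θ : Fin K → ℝ) : Set (Fin K → ℝ) :=
  convexHull ℝ (insert θ {z | ∃ ℓ : Fin K, ℓ ≠ k ∧ z = vtx K ℓ})

/-- The weight of the walk `j 0, j 1, …, j m` for edge weights `w`. -/
def walkWeight (K : ℕ) (w : Fin K → Fin K → ℝ) (m : ℕ) (j : Fin (m + 1) → Fin K) : ℝ :=
  ∑ i : Fin m, w (j i.castSucc) (j i.succ)

/-- The minimum weight over simple walks (pairwise distinct vertices) from `a` to `b`. -/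
def minWalk (K : ℕ) (w : Fin K → Fin K → ℝ) (a b : Fin K) : ℝ :=
  sInf {v : ℝ | ∃ (m : ℕ) (j : Fin (m + 1) → Fin K),
    j 0 = a ∧ j (Fin.last m) = b ∧ Function.Injective j ∧ v = walkWeight K w m j}

/-! A point `θ ∈ F(u)` is strictly positive, since every category is observed, and for
`n ∈ I_j` the membership `u_n ∈ Δ_j(θ)` amounts to `θ_ℓ / θ_j ≤ u_{n,ℓ} / u_{n,j}` for all `ℓ`;
hence `θ_ℓ / θ_j ≤ η_{j→ℓ}`. So `log θ` is a potential for the weights `log η`: every walk from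
`ℓ` to `k` weighs at least `log θ_k - log θ_ℓ`. Consequently `m(k) = 0` (the only simple walk from
`k` to `k` is trivial) and `-m(ℓ) ≤ log θ_ℓ - log θ_k ≤ log η_{k→ℓ}`, i.e.
`θ*_ℓ / θ*_k ≤ η_{k→ℓ} ≤ u_{n,ℓ} / u_{n,k}` for `n ∈ I_k`, which is membership in `Δ_k(θ*)`. -/

open Finset Real

section Subsimplex

variable {K : ℕ} {k : Fin K} {θ z : Fin K → ℝ}

lemma smul_vtx (K : ℕ) (ℓ : Fin K) (c : ℝ) : c • vtx K ℓ = Pi.single ℓ c := by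
  ext i
  by_cases h : i = ℓ <;> simp [vtx, h]

lemma mul_le_mul_of_mem_subsimplex (hθk : 0 ≤ θ k) (hz : z ∈ subsimplex K k θ) (ℓ : Fin K) :
    θ ℓ * z k ≤ θ k * z ℓ := by
  revert ℓ
  change z ∈ {z : Fin K → ℝ | ∀ ℓ, θ ℓ * z k ≤ θ k * z ℓ}
  refine convexHull_min ?_ ?_ hz
  · rintro z (rfl | ⟨j, hj, rfl⟩) ℓ
    · exact (mul_comm _ _).le
    · have hjk : k ≠ j := fun h => hj h.symm
      simp only [vtx, if_neg hjk, mul_zero]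
      positivity
  · intro a ha b hb s r hs hr _ ℓ
    simp only [Pi.add_apply, Pi.smul_apply, smul_eq_mul]
    nlinarith [mul_le_mul_of_nonneg_left (ha ℓ) hs, mul_le_mul_of_nonneg_left (hb ℓ) hr]

lemma div_le_div_of_mem_subsimplex (hθk : 0 < θ k) (hzk : 0 < z k)
    (hz : z ∈ subsimplex K k θ) (ℓ : Fin K) : θ ℓ / θ k ≤ z ℓ / z k := by
  rw [div_le_div_iff₀ hθk hzk, mul_comm (z ℓ)]
  exact mul_le_mul_of_mem_subsimplex hθk.le hz ℓ

lemma pos_of_mem_subsimplex (hθ : θ ∈ stdSimplex ℝ (Fin K)) (hz : z ∈ stdSimplex ℝ (Fin K))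
    (hzk : 0 < z k) (hzθ : z ∈ subsimplex K k θ) : 0 < θ k := by
  have hsum : ∑ ℓ, θ ℓ * z k ≤ ∑ ℓ, θ k * z ℓ :=
    sum_le_sum fun ℓ _ => mul_le_mul_of_mem_subsimplex (hθ.1 k) hzθ ℓ
  rw [← sum_mul, ← mul_sum, hθ.2, hz.2, one_mul, mul_one] at hsum
  exact hzk.trans_le hsum

/-- Writing `t = z k / θ k`, the point is `z = t • θ + ∑ ℓ, (z ℓ - t θ ℓ) • V_ℓ`, a convex combination
whose `V_k`-coefficient vanishes. -/
lemma mem_subsimplex_of_mul_le (hθ : θ ∈ stdSimplex ℝ (Fin K)) (hz : z ∈ stdSimplex ℝ (Fin K))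
    (hθk : 0 < θ k) (h : ∀ ℓ, θ ℓ * z k ≤ θ k * z ℓ) : z ∈ subsimplex K k θ := by
  set t := z k / θ k
  have htθ : t * θ k = z k := div_mul_cancel₀ _ hθk.ne'
  let w : Fin K → ℝ := fun ℓ => (z ℓ - t * θ ℓ) + if ℓ = k then t else 0
  let p : Fin K → Fin K → ℝ := fun ℓ => if ℓ = k then θ else vtx K ℓ
  have hw_nonneg : ∀ ℓ ∈ univ, 0 ≤ w ℓ := by
    intro ℓ _
    by_cases hℓ : ℓ = k
    · subst hℓ
      simp only [w, htθ, sub_self, if_true, zero_add]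
      exact div_nonneg (hz.1 _) hθk.le
    · simp only [w, if_neg hℓ, add_zero, sub_nonneg, t, div_mul_eq_mul_div, div_le_iff₀ hθk]
      linarith [h ℓ]
  have hw_sum : ∑ ℓ, w ℓ = 1 := by
    simp only [w, sum_add_distrib, sum_sub_distrib, ← mul_sum, hz.2, hθ.2, sum_ite_eq']
    simp
  have hp_mem : ∀ ℓ ∈ univ, p ℓ ∈ subsimplex K k θ := by
    intro ℓ _
    apply subset_convexHull
    by_cases hℓ : ℓ = k
    · simp [p, hℓ]
    · simp only [p, if_neg hℓ]
      exact Set.mem_insert_of_mem _ ⟨ℓ, hℓ, rfl⟩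
  have hwp : ∀ ℓ, w ℓ • p ℓ = Pi.single ℓ (z ℓ - t * θ ℓ) + if ℓ = k then t • θ else 0 := by
    intro ℓ
    by_cases hℓ : ℓ = k
    · subst hℓ
      simp [w, p, htθ]
    · simp [w, p, hℓ, smul_vtx]
  have hz_eq : ∑ ℓ, w ℓ • p ℓ = z := by
    simp only [hwp, sum_add_distrib, univ_sum_single (fun ℓ => z ℓ - t * θ ℓ), sum_ite_eq']
    simp only [mem_univ, if_true]
    ext i
    simp
  rw [← hz_eq]
  exact (convex_convexHull ℝ _).sum_mem hw_nonneg hw_sum hp_mem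

lemma mem_subsimplex_div_sum {g : Fin K → ℝ} (hg : ∀ ℓ, 0 < g ℓ)
    (hz : z ∈ stdSimplex ℝ (Fin K)) (h : ∀ ℓ, g ℓ * z k ≤ g k * z ℓ) :
    z ∈ subsimplex K k (fun ℓ => g ℓ / ∑ ℓ', g ℓ') := by
  have hS : 0 < ∑ ℓ', g ℓ' := sum_pos (fun ℓ _ => hg ℓ) ⟨k, mem_univ k⟩
  refine mem_subsimplex_of_mul_le ⟨fun ℓ => (div_pos (hg ℓ) hS).le, ?_⟩ hz (div_pos (hg k) hS)
    fun ℓ => ?_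
  · rw [← sum_div, div_self hS.ne']
  · simp only [div_mul_eq_mul_div]
    exact div_le_div_of_nonneg_right (h ℓ) hS.le

end Subsimplex

section Walks

variable {K : ℕ} {w : Fin K → Fin K → ℝ}

lemma Fin.sum_succ_sub_castSucc (m : ℕ) (g : Fin (m + 1) → ℝ) :
    ∑ i : Fin m, (g i.succ - g i.castSucc) = g (Fin.last m) - g 0 := by
  induction m with
  | zero => simp
  | succ n ih =>
    rw [Fin.sum_univ_castSucc]
    simp only [Fin.succ_castSucc]
    rw [ih (fun i => g i.castSucc)]
    simp [Fin.succ_last]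

lemma sub_le_walkWeight {f : Fin K → ℝ} (hw : ∀ a b, f b - f a ≤ w a b) (m : ℕ)
    (j : Fin (m + 1) → Fin K) : f (j (Fin.last m)) - f (j 0) ≤ walkWeight K w m j := by
  rw [← Fin.sum_succ_sub_castSucc m (fun i => f (j i))]
  exact sum_le_sum fun i _ => hw _ _

lemma exists_simple_walk (a b : Fin K) :
    ∃ (m : ℕ) (j : Fin (m + 1) → Fin K), j 0 = a ∧ j (Fin.last m) = b ∧ Function.Injective j := by
  by_cases hab : a = b
  · exact ⟨0, fun _ => a, rfl, hab, fun i i' _ => Fin.ext (by omega)⟩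
  · refine ⟨1, ![a, b], rfl, rfl, ?_⟩
    intro i i' h
    fin_cases i <;> fin_cases i' <;> first | rfl | exact absurd h hab | exact absurd h.symm hab

lemma sub_le_minWalk {f : Fin K → ℝ} (hw : ∀ a b, f b - f a ≤ w a b) (a b : Fin K) :
    f b - f a ≤ minWalk K w a b := by
  obtain ⟨m, j, hj0, hjm, hj⟩ := exists_simple_walk a b
  refine le_csInf ⟨_, m, j, hj0, hjm, hj, rfl⟩ ?_
  rintro _ ⟨m, j, rfl, rfl, -, rfl⟩
  exact sub_le_walkWeight hw m j

lemma minWalk_self (w : Fin K → Fin K → ℝ) (a : Fin K) : minWalk K w a a = 0 := by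
  suffices h : {v : ℝ | ∃ (m : ℕ) (j : Fin (m + 1) → Fin K),
      j 0 = a ∧ j (Fin.last m) = a ∧ Function.Injective j ∧ v = walkWeight K w m j} = {0} by
    rw [minWalk, h, csInf_singleton]
  ext v
  constructor
  · rintro ⟨m, j, hj0, hjm, hj, rfl⟩
    have hm : m = 0 := by simpa using congrArg Fin.val (hj (hjm.trans hj0.symm))
    subst hm
    simp [walkWeight]
  · rintro rfl
    exact ⟨0, fun _ => a, rfl, rfl, fun i i' _ => Fin.ext (by omega), by simp [walkWeight]⟩

end Walks

theorem stmt15 (K N : ℕ)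
    (x : Fin N → Fin K) (hx : ∀ k, ∃ n, x n = k)
    (u : Fin N → Fin K → ℝ) (hu : ∀ n, u n ∈ stdSimplex ℝ (Fin K))
    (hupos : ∀ n ℓ, 0 < u n ℓ)
    (hR : ∃ θ ∈ stdSimplex ℝ (Fin K), ∀ n, u n ∈ subsimplex K (x n) θ)
    (η : Fin K → Fin K → ℝ)
    (hη : ∀ k ℓ, IsLeast {v : ℝ | ∃ n, x n = k ∧ v = u n ℓ / u n k} (η k ℓ))
    (k : Fin K) (m : Fin K → ℝ)
    (hm : ∀ ℓ, m ℓ = minWalk K (fun a b => Real.log (η a b)) ℓ k)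
    (θstar : Fin K → ℝ)
    (hθstar : ∀ ℓ, θstar ℓ = Real.exp (-(m ℓ)) / ∑ ℓ' : Fin K, Real.exp (-(m ℓ'))) :
    ∀ n, x n = k → u n ∈ subsimplex K k θstar := by
  obtain ⟨θ, hθ, hθu⟩ := hR
  have hθpos : ∀ j, 0 < θ j := fun j => by
    obtain ⟨n, rfl⟩ := hx j
    exact pos_of_mem_subsimplex hθ (hu n) (hupos n _) (hθu n)
  have hθη : ∀ j ℓ, θ ℓ / θ j ≤ η j ℓ := fun j ℓ => by
    obtain ⟨n, rfl, hv⟩ := (hη j ℓ).1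
    exact hv ▸ div_le_div_of_mem_subsimplex (hθpos _) (hupos n _) (hθu n) ℓ
  have hpot : ∀ j ℓ, log (θ ℓ) - log (θ j) ≤ log (η j ℓ) := fun j ℓ => by
    rw [← log_div (hθpos ℓ).ne' (hθpos j).ne']
    exact log_le_log (div_pos (hθpos ℓ) (hθpos j)) (hθη j ℓ)
  have hmk : m k = 0 := (hm k).trans (minWalk_self _ k)
  have hexp_le : ∀ ℓ, exp (-m ℓ) ≤ η k ℓ := fun ℓ => by
    have hηpos : 0 < η k ℓ := (div_pos (hθpos ℓ) (hθpos k)).trans_le (hθη k ℓ)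
    rw [← exp_log hηpos, exp_le_exp]
    linarith [hm ℓ ▸ sub_le_minWalk hpot ℓ k, hpot k ℓ]
  intro n hn
  rw [show θstar = fun ℓ => exp (-m ℓ) / ∑ ℓ', exp (-m ℓ') from funext hθstar]
  refine mem_subsimplex_div_sum (fun ℓ => exp_pos _) (hu n) fun ℓ => ?_
  rw [hmk, neg_zero, exp_zero, one_mul, ← le_div_iff₀ (hupos n k)]
  exact (hexp_le ℓ).trans ((hη k ℓ).2 ⟨n, hn, rfl⟩)
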